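/- arXiv:1205.7036 — 2 statements merged into one kernel-verified Lean document; each statement's English description precedes it below -/
import Mathlib

section
/- Let n ≥ 1 and let H be a matrix over F₂ with columns indexed by Fin n × Fin 2. The function φ : ℝ → ℝ, φ(p) = (1/n)·Σ_{E ⊆ Fin n} rank(H_E) · p^|E| · (1−p)^(n−|E|), is monotone nondecreasing on the interval [0,1]. -/
open Finset

/-- The matrix `H_E`: columns of qubits outside `E` are replaced by zero (this does not
change the rank, so `(erased H E).rank` is the rank of the submatrix `H_E`). -/
def erased {r n : ℕ} (H : Matrix (Fin r) (Fin n × Fin 2) (ZMod 2)) (E : Finset (Fin n)) :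
    Matrix (Fin r) (Fin n × Fin 2) (ZMod 2) :=
  Matrix.of fun a p => if p.1 ∈ E then H a p else 0

/-- `Φ(x) = Σ_E rank(H_E) · ∏_{i∈E} x_i · ∏_{i∉E} (1−x_i)`, the expected rank when
coordinate `i` is erased independently with probability `x_i`. -/
noncomputable def Phi {r n : ℕ} (H : Matrix (Fin r) (Fin n × Fin 2) (ZMod 2))
    (x : Fin n → ℝ) : ℝ :=
  ∑ E : Finset (Fin n), ((erased H E).rank : ℝ) *
    (∏ i ∈ E, x i) * (∏ i ∈ Eᶜ, (1 - x i))

/-- The partial derivative of `f` with respect to the `i`-th coordinate at `x`. -/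
noncomputable def pd {n : ℕ} (f : (Fin n → ℝ) → ℝ) (i : Fin n) (x : Fin n → ℝ) : ℝ :=
  deriv (fun t : ℝ => f (Function.update x i t)) (x i)

/-- `φ(p) = (1/n)·Σ_E rank(H_E)·p^|E|·(1−p)^(n−|E|)`, the normalized expected rank of
the erased submatrix. -/
noncomputable def phi {r n : ℕ} (H : Matrix (Fin r) (Fin n × Fin 2) (ZMod 2)) (p : ℝ) : ℝ :=
  (1 / n : ℝ) * ∑ E : Finset (Fin n),
    ((erased H E).rank : ℝ) * p ^ E.card * (1 - p) ^ (n - E.card)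


section RandomSubset

variable {α : Type*}

/-- The expectation of `c T` for a random subset `T ⊆ s` containing each element independently
with probability `p`. -/
noncomputable def expectRandomSubset (s : Finset α) (c : Finset α → ℝ) (p : ℝ) : ℝ :=
  ∑ t ∈ s.powerset, c t * p ^ #t * (1 - p) ^ (#s - #t)

lemma expectRandomSubset_insert [DecidableEq α] {s : Finset α} {a : α} (ha : a ∉ s)
    (c : Finset α → ℝ) (p : ℝ) :
    expectRandomSubset (insert a s) c p =
      (1 - p) * expectRandomSubset s c p +
        p * expectRandomSubset s (fun t => c (insert a t)) p := by
  simp only [expectRandomSubset, sum_powerset_insert ha, mul_sum, card_insert_of_notMem ha]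
  congr 1 <;> refine sum_congr rfl fun t ht => ?_
  · rw [Nat.sub_add_comm (card_le_card (mem_powerset.mp ht)), pow_succ]
    ring
  · rw [card_insert_of_notMem fun hat => ha (mem_powerset.mp ht hat), Nat.add_sub_add_right,
      pow_succ]
    ring

lemma expectRandomSubset_mono {s : Finset α} {c d : Finset α → ℝ} (hcd : c ≤ d) {p : ℝ}
    (hp : p ∈ Set.Icc (0 : ℝ) 1) : expectRandomSubset s c p ≤ expectRandomSubset s d p := by
  have hq : 0 ≤ 1 - p := sub_nonneg.mpr hp.2
  unfold expectRandomSubset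
  gcongr with t
  · exact pow_nonneg hp.1 _
  · exact hcd t

/-- Conditioning on whether `a ∈ T` writes the expectation over `insert a s` as
`(1 - p) f₀ p + p f₁ p`, where `f₀ ≤ f₁` are expectations over `s` and monotone by induction;
moving `p` up both raises `f₀, f₁` and shifts weight from `f₀` to `f₁`. -/
theorem monotoneOn_expectRandomSubset [DecidableEq α] (s : Finset α) {c : Finset α → ℝ}
    (hc : Monotone c) : MonotoneOn (expectRandomSubset s c) (Set.Icc 0 1) := by
  induction s using Finset.induction_on generalizing c with
  | empty =>
    intro p _ q _ _
    simp [expectRandomSubset]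
  | insert a s ha ih =>
    intro p hp q hq hpq
    set f₀ := expectRandomSubset s c
    set f₁ := expectRandomSubset s fun t => c (insert a t)
    have hc₁ : Monotone fun t => c (insert a t) := fun t u htu => hc (insert_subset_insert a htu)
    have hf₀₁ : f₀ p ≤ f₁ p := expectRandomSubset_mono (fun t => hc (subset_insert a t)) hp
    rw [expectRandomSubset_insert ha, expectRandomSubset_insert ha]
    calc (1 - p) * f₀ p + p * f₁ p
        ≤ (1 - q) * f₀ p + q * f₁ p := by
          linarith [mul_nonneg (sub_nonneg.mpr hpq) (sub_nonneg.mpr hf₀₁)]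
      _ ≤ (1 - q) * f₀ q + q * f₁ q :=
        add_le_add (mul_le_mul_of_nonneg_left (ih hc hp hq hpq) (sub_nonneg.mpr hq.2))
          (mul_le_mul_of_nonneg_left (ih hc₁ hp hq hpq) hq.1)

end RandomSubset

section Erased

variable {r n : ℕ} (H : Matrix (Fin r) (Fin n × Fin 2) (ZMod 2))

lemma erased_eq_mul_diagonal {E F : Finset (Fin n)} (h : E ⊆ F) :
    erased H E = erased H F *
      Matrix.diagonal fun q : Fin n × Fin 2 => if q.1 ∈ E then (1 : ZMod 2) else 0 := by
  ext a q
  by_cases hq : q.1 ∈ E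
  · simp [erased, hq, h hq]
  · simp [erased, hq]

lemma monotone_rank_erased : Monotone fun E => (erased H E).rank := fun E _ h => by
  change (erased H E).rank ≤ _
  rw [erased_eq_mul_diagonal H h]
  exact Matrix.rank_mul_le_left _ _

lemma phi_eq_expectRandomSubset :
    phi H = fun p =>
      (1 / n : ℝ) * expectRandomSubset univ (fun E => ((erased H E).rank : ℝ)) p := by
  ext p
  simp [phi, expectRandomSubset]

end Erased

theorem expected_rank_monotone_general
    {r n : ℕ} (H : Matrix (Fin r) (Fin n × Fin 2) (ZMod 2)) :
    MonotoneOn (phi H) (Set.Icc (0 : ℝ) 1) := by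
  rw [phi_eq_expectRandomSubset]
  have hrank : Monotone fun E : Finset (Fin n) => ((erased H E).rank : ℝ) :=
    Nat.mono_cast.comp (monotone_rank_erased H)
  exact fun p hp q hq hpq => mul_le_mul_of_nonneg_left
    (monotoneOn_expectRandomSubset univ hrank hp hq hpq) (by positivity)

theorem expected_rank_monotone
    {r n : ℕ} (hn : 1 ≤ n) (H : Matrix (Fin r) (Fin n × Fin 2) (ZMod 2)) :
    MonotoneOn (phi H) (Set.Icc (0 : ℝ) 1) :=
  expected_rank_monotone_general H
end

section
/- Let n ≥ 1, let H be a matrix over F₂ with columns indexed by Fin n × Fin 2, and let φ(p) = (1/n)·Σ_{E ⊆ Fin n} rank(H_E) · p^|E| · (1−p)^(n−|E|). If p ∈ [0, 1/2] and M is a real number with φ(p) ≤ M, then φ(1−p) − φ(p) ≥ ((1−2p)/(1−p)) · (rank(H)/n − M). -/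
/-!
For `f` defined on the subsets of a finite set `G`, let `g_f(q)` be the expectation of `f(S)` for
`S ⊆ G` containing each element independently with probability `q`. If `f` is submodular, then
`(1 - s) g_f(p) + s f(G) ≤ g_f(p + (1 - p) s)` for `p, s ∈ [0, 1]`. By induction on `G`:
conditioning on whether a new element `i` is drawn splits both sides, and what is left over is the
expected marginal gain of `i`, which by diminishing returns is at least its marginal gain over all
of `G`. The function `E ↦ rank H_E` is submodular because column spaces satisfy
`V(A ∪ B) = V(A) ⊔ V(B)` and `V(A ∩ B) ≤ V(A) ⊓ V(B)`, and `n φ = g_rank`; the choice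
`s = (1 - 2p)/(1 - p)`, for which `p + (1 - p) s = 1 - p`, gives the theorem.
-/

open Finset

section Submodular

variable {α : Type*} [DecidableEq α]

def IsSubmodular (f : Finset α → ℝ) : Prop :=
  ∀ A B : Finset α, f (A ∪ B) + f (A ∩ B) ≤ f A + f B

lemma IsSubmodular.comp_insert {f : Finset α → ℝ} (hf : IsSubmodular f) (i : α) :
    IsSubmodular fun S => f (insert i S) := by
  intro A B
  simpa only [insert_union_distrib, insert_inter_distrib] using hf (insert i A) (insert i B)

lemma IsSubmodular.marginal_le_of_subset {f : Finset α → ℝ} (hf : IsSubmodular f) {S B : Finset α}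
    {i : α} (hSB : S ⊆ B) (hi : i ∉ B) :
    f (insert i B) - f B ≤ f (insert i S) - f S := by
  have hunion : insert i S ∪ B = insert i B := by
    rw [insert_union, union_eq_right.mpr hSB]
  have hinter : insert i S ∩ B = S := by
    rw [insert_inter_of_notMem hi, inter_eq_left.mpr hSB]
  have := hf (insert i S) B
  rw [hunion, hinter] at this
  linarith

end Submodular

section BernoulliExpect

variable {α : Type*}

def bernoulliExpect (G : Finset α) (q : ℝ) (f : Finset α → ℝ) : ℝ :=
  ∑ S ∈ G.powerset, q ^ S.card * (1 - q) ^ (G.card - S.card) * f S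

@[simp]
lemma bernoulliExpect_empty (q : ℝ) (f : Finset α → ℝ) : bernoulliExpect ∅ q f = f ∅ := by
  simp [bernoulliExpect]

lemma bernoulliExpect_insert [DecidableEq α] {G : Finset α} {i : α} (hi : i ∉ G) (q : ℝ)
    (f : Finset α → ℝ) :
    bernoulliExpect (insert i G) q f =
      (1 - q) * bernoulliExpect G q f + q * bernoulliExpect G q fun S => f (insert i S) := by
  simp only [bernoulliExpect, sum_powerset_insert hi, mul_sum, card_insert_of_notMem hi]
  congr 1 <;> refine sum_congr rfl fun S hS => ?_
  · have hcard : G.card + 1 - S.card = G.card - S.card + 1 := by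
      have := card_le_card (mem_powerset.mp hS); omega
    rw [hcard, pow_succ]; ring
  · have hiS : i ∉ S := fun h => hi (mem_powerset.mp hS h)
    rw [card_insert_of_notMem hiS, Nat.add_sub_add_right, pow_succ]; ring

lemma bernoulliExpect_const [DecidableEq α] (G : Finset α) (q c : ℝ) :
    bernoulliExpect G q (fun _ => c) = c := by
  induction G using Finset.induction_on with
  | empty => simp
  | insert i G hi ih => rw [bernoulliExpect_insert hi, ih]; ring

lemma bernoulliExpect_sub (G : Finset α) (q : ℝ) (f g : Finset α → ℝ) :
    bernoulliExpect G q (fun S => f S - g S) = bernoulliExpect G q f - bernoulliExpect G q g := by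
  simp only [bernoulliExpect, mul_sub, sum_sub_distrib]

lemma bernoulliExpect_mono (G : Finset α) {q : ℝ} (hq : q ∈ Set.Icc (0 : ℝ) 1)
    {f g : Finset α → ℝ} (hfg : ∀ S ⊆ G, f S ≤ g S) :
    bernoulliExpect G q f ≤ bernoulliExpect G q g :=
  sum_le_sum fun S hS => mul_le_mul_of_nonneg_left (hfg S (mem_powerset.mp hS))
    (mul_nonneg (pow_nonneg hq.1 _) (pow_nonneg (sub_nonneg.mpr hq.2) _))

lemma IsSubmodular.marginal_le_bernoulliExpect_marginal [DecidableEq α] {f : Finset α → ℝ}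
    (hf : IsSubmodular f) {G : Finset α} {i : α} (hi : i ∉ G) {q : ℝ}
    (hq : q ∈ Set.Icc (0 : ℝ) 1) :
    f (insert i G) - f G ≤
      bernoulliExpect G q (fun S => f (insert i S)) - bernoulliExpect G q f := by
  rw [← bernoulliExpect_sub, ← bernoulliExpect_const G q (f (insert i G) - f G)]
  exact bernoulliExpect_mono G hq fun S hS => hf.marginal_le_of_subset hS hi

theorem IsSubmodular.interpolate_le_bernoulliExpect [DecidableEq α] {f : Finset α → ℝ}
    (hf : IsSubmodular f) (G : Finset α) {p s : ℝ} (hp : p ∈ Set.Icc (0 : ℝ) 1)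
    (hs : s ∈ Set.Icc (0 : ℝ) 1) :
    (1 - s) * bernoulliExpect G p f + s * f G ≤ bernoulliExpect G (p + (1 - p) * s) f := by
  induction G using Finset.induction_on generalizing f with
  | empty => simp only [bernoulliExpect_empty]; linarith
  | insert i G hi ih =>
    set q := p + (1 - p) * s
    have hq : q ∈ Set.Icc (0 : ℝ) 1 := ⟨by nlinarith [hp.1, hp.2, hs.1], by nlinarith [hp.2, hs.2]⟩
    have h1 := mul_le_mul_of_nonneg_left (ih hf) (sub_nonneg.mpr hq.2)
    have h2 := mul_le_mul_of_nonneg_left (ih (hf.comp_insert i)) hq.1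
    have h3 := mul_le_mul_of_nonneg_left (hf.marginal_le_bernoulliExpect_marginal hi hp)
      (mul_nonneg (mul_nonneg hs.1 (sub_nonneg.mpr hs.2)) (sub_nonneg.mpr hp.2))
    rw [bernoulliExpect_insert hi, bernoulliExpect_insert hi]
    linear_combination h1 + h2 + h3

end BernoulliExpect

section ColumnSpan

open Module

variable {K V ι α : Type*} [Field K] [AddCommGroup V] [Module K V] [FiniteDimensional K V]
  [DecidableEq α]

lemma isSubmodular_finrank_span_image_preimage (v : ι → V) (π : ι → α) :
    IsSubmodular fun s : Finset α => (finrank K (Submodule.span K (v '' (π ⁻¹' s))) : ℝ) := by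
  intro A B
  have hunion : Submodule.span K (v '' (π ⁻¹' ↑(A ∪ B))) =
      Submodule.span K (v '' (π ⁻¹' A)) ⊔ Submodule.span K (v '' (π ⁻¹' B)) := by
    rw [coe_union, Set.preimage_union, Set.image_union, Submodule.span_union]
  have hinter : Submodule.span K (v '' (π ⁻¹' ↑(A ∩ B))) ≤
      Submodule.span K (v '' (π ⁻¹' A)) ⊓ Submodule.span K (v '' (π ⁻¹' B)) :=
    le_inf (Submodule.span_mono (Set.image_mono (Set.preimage_mono (by simp))))
      (Submodule.span_mono (Set.image_mono (Set.preimage_mono (by simp))))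
  have hdim := Submodule.finrank_sup_add_finrank_inf_eq
    (Submodule.span K (v '' (π ⁻¹' A))) (Submodule.span K (v '' (π ⁻¹' B)))
  rw [← hunion] at hdim
  have := Submodule.finrank_mono hinter
  dsimp only
  exact_mod_cast (by omega : _ ≤ _)

end ColumnSpan

section Erasure

variable {r n : ℕ} (H : Matrix (Fin r) (Fin n × Fin 2) (ZMod 2))

lemma rank_erased (E : Finset (Fin n)) :
    (erased H E).rank =
      Module.finrank (ZMod 2) (Submodule.span (ZMod 2) (H.col '' (Prod.fst ⁻¹' E))) := by
  suffices Submodule.span (ZMod 2) (Set.range (erased H E).col) =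
      Submodule.span (ZMod 2) (H.col '' (Prod.fst ⁻¹' E)) by
    rw [Matrix.rank_eq_finrank_span_cols, this]
  apply le_antisymm <;> rw [Submodule.span_le]
  · rintro _ ⟨c, rfl⟩
    by_cases hc : c.1 ∈ E
    · refine Submodule.subset_span ⟨c, hc, ?_⟩
      ext a; simp [erased, hc]
    · have : (erased H E).col c = 0 := by ext a; simp [erased, hc]
      rw [this]; exact Submodule.zero_mem _
  · rintro _ ⟨c, hc, rfl⟩
    refine Submodule.subset_span ⟨c, ?_⟩
    ext a; simp [erased, show c.1 ∈ E from hc]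

lemma isSubmodular_rank_erased : IsSubmodular fun E => ((erased H E).rank : ℝ) := by
  simpa only [rank_erased] using isSubmodular_finrank_span_image_preimage H.col Prod.fst

@[simp]
lemma erased_univ : erased H univ = H := by
  ext a c; simp [erased]

lemma phi_eq_bernoulliExpect (p : ℝ) :
    phi H p = (1 / n : ℝ) * bernoulliExpect univ p fun E => ((erased H E).rank : ℝ) := by
  simp only [phi, bernoulliExpect, powerset_univ, card_univ, Fintype.card_fin]
  exact congrArg _ (sum_congr rfl fun E _ => by ring)

end Erasure

theorem rank_difference_lower_bound_general
    {r n : ℕ} (H : Matrix (Fin r) (Fin n × Fin 2) (ZMod 2))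
    (p M : ℝ) (hp : p ∈ Set.Icc (0 : ℝ) (1 / 2)) (hM : phi H p ≤ M) :
    ((1 - 2 * p) / (1 - p)) * ((H.rank : ℝ) / n - M) ≤ phi H (1 - p) - phi H p := by
  obtain ⟨hp0, hp2⟩ := hp
  set s := (1 - 2 * p) / (1 - p) with hs_def
  have hs : s ∈ Set.Icc (0 : ℝ) 1 :=
    ⟨div_nonneg (by linarith) (by linarith), (div_le_one (by linarith)).mpr (by linarith)⟩
  have hq : p + (1 - p) * s = 1 - p := by
    rw [hs_def, mul_div_cancel₀ _ (by linarith)]; ring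
  have key := (isSubmodular_rank_erased H).interpolate_le_bernoulliExpect univ
    ⟨hp0, by linarith⟩ hs
  rw [hq, erased_univ] at key
  simp only [phi_eq_bernoulliExpect] at hM ⊢
  set g := fun q => bernoulliExpect univ q fun E => ((erased H E).rank : ℝ)
  calc s * ((H.rank : ℝ) / n - M)
      ≤ s * ((H.rank : ℝ) / n - 1 / n * g p) := mul_le_mul_of_nonneg_left (by linarith) hs.1
    _ = 1 / n * ((1 - s) * g p + s * H.rank) - 1 / n * g p := by ring
    _ ≤ 1 / n * g (1 - p) - 1 / n * g p := by gcongr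

theorem rank_difference_lower_bound
    {r n : ℕ} (hn : 1 ≤ n) (H : Matrix (Fin r) (Fin n × Fin 2) (ZMod 2))
    (p M : ℝ) (hp : p ∈ Set.Icc (0 : ℝ) (1 / 2)) (hM : phi H p ≤ M) :
    ((1 - 2 * p) / (1 - p)) * ((H.rank : ℝ) / n - M) ≤ phi H (1 - p) - phi H p :=
  rank_difference_lower_bound_general H p M hp hM
end
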